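/- For every W_(A∩B)‾-critical simplex γ of (A∩B)‾ there exists exactly one simplex σ ∈ S'_γ that appears in no pair of W, and this σ lies in A_γ (namely σ = [ā_{i₀}, b̄_{i₀},…,b̄_{i_q}] for γ = [c̄_{i₀},…,c̄_{i_q}]). Conversely, if σ ∈ ℙ_int((A∩B)‾) appears in no pair of W, then GS(σ) is W_(A∩B)‾-critical. -/
import Mathlib


open scoped Classical

noncomputable section

namespace DMT

variable {V : Type*} {U : Type*}

/-- An abstract simplicial complex: a nonempty collection of nonempty finite
sets of vertices that is closed under taking nonempty subsets. -/
def IsComplex (K : Set (Finset V)) : Prop :=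
  K.Nonempty ∧ ∀ σ ∈ K, σ.Nonempty ∧ ∀ τ : Finset V, τ ⊆ σ → τ.Nonempty → τ ∈ K

/-- The incidence number `⟨τ, σ⟩` of `σ` with respect to `τ`, where simplices are
oriented by listing their vertices increasingly: it is `(-1)^i` if `σ` is obtained
from `τ` by deleting the `i`-th vertex, and `0` if `σ` is not a facet of `τ`. -/
def incidence [LinearOrder V] (τ σ : Finset V) : ℤ :=
  if σ ⊆ τ ∧ τ.card = σ.card + 1 then
    ∑ v ∈ τ \ σ, (-1 : ℤ) ^ (τ.filter fun u => u < v).card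
  else 0

/-- A discrete vector field on a complex `K`: a set of pairs `(σ, τ)` of simplices of `K`
with `σ` a facet of `τ`, such that every simplex appears in at most one pair. -/
def IsDVF (K : Set (Finset U)) (W : Set (Finset U × Finset U)) : Prop :=
  (∀ p ∈ W, p.1 ∈ K ∧ p.2 ∈ K ∧ p.1 ⊆ p.2 ∧ p.2.card = p.1.card + 1) ∧
  ∀ p ∈ W, ∀ p' ∈ W, (p.1 = p'.1 ∨ p.1 = p'.2 ∨ p.2 = p'.1 ∨ p.2 = p'.2) → p = p'

/-- A simplex is critical for `W` if it appears in no pair of `W`. -/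
def IsCritical (W : Set (Finset U × Finset U)) (σ : Finset U) : Prop :=
  ∀ p ∈ W, p.1 ≠ σ ∧ p.2 ≠ σ

/-- The set of `q`-dimensional `W`-critical simplices of `K`. -/
def critSet (K : Set (Finset U)) (W : Set (Finset U × Finset U)) (q : ℕ) : Set (Finset U) :=
  {σ | σ ∈ K ∧ σ.card = q + 1 ∧ IsCritical W σ}

/-- A `W`-trajectory `τ₀, σ₁, τ₁, …, σ_k, τ_k`. -/
structure Traj (W : Set (Finset U × Finset U)) where
  k : ℕ
  t : ℕ → Finset U
  s : ℕ → Finset U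
  dim_t : ∀ i ≤ k, (t i).card = (t 0).card
  dim_s : ∀ i, 1 ≤ i → i ≤ k → (s i).card + 1 = (t 0).card
  mem : ∀ i, 1 ≤ i → i ≤ k → (s i, t i) ∈ W
  sub : ∀ i, 1 ≤ i → i ≤ k → s i ⊆ t (i - 1)
  nmem : ∀ i, 1 ≤ i → i ≤ k → (s i, t (i - 1)) ∉ W

/-- `W` is acyclic: there is no nontrivial closed `W`-trajectory. -/
def IsAcyclic (W : Set (Finset U × Finset U)) : Prop :=
  ¬ ∃ P : Traj W, 1 < P.k ∧ P.t 0 = P.t P.k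

/-- A gradient vector field on `K`: an acyclic discrete vector field. -/
def IsGVF (K : Set (Finset U)) (W : Set (Finset U × Finset U)) : Prop :=
  IsDVF K W ∧ IsAcyclic W

/-- An extended `W`-trajectory `τ₀, σ₁, τ₁, …, σ_k, τ_k, σ_{k+1}`, with
`(σᵢ, τᵢ) ∈ W` for `1 ≤ i ≤ k`, and `σᵢ ⊆ τ_{i-1}`, `(σᵢ, τ_{i-1}) ∉ W` for
`1 ≤ i ≤ k + 1`.  (The values of `t` and `s` outside the relevant ranges are
normalized to `∅`.) -/
structure ExtTraj (W : Set (Finset U × Finset U)) where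
  k : ℕ
  t : ℕ → Finset U
  s : ℕ → Finset U
  dim_t : ∀ i ≤ k, (t i).card = (t 0).card
  dim_s : ∀ i, 1 ≤ i → i ≤ k + 1 → (s i).card + 1 = (t 0).card
  mem : ∀ i, 1 ≤ i → i ≤ k → (s i, t i) ∈ W
  sub : ∀ i, 1 ≤ i → i ≤ k + 1 → s i ⊆ t (i - 1)
  nmem : ∀ i, 1 ≤ i → i ≤ k + 1 → (s i, t (i - 1)) ∉ W
  pad_t : ∀ i, k < i → t i = ∅
  pad_s : ∀ i, i = 0 ∨ k + 1 < i → s i = ∅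

/-- The weight of an extended trajectory. -/
def ExtTraj.weight [LinearOrder U] {W : Set (Finset U × Finset U)} (P : ExtTraj W) : ℤ :=
  (∏ i ∈ Finset.range P.k,
      -(incidence (P.t i) (P.s (i + 1)) * incidence (P.t (i + 1)) (P.s (i + 1)))) *
    incidence (P.t P.k) (P.s (P.k + 1))

/-- `Γ(τ, σ)`: the extended `W`-trajectories with initial simplex `τ` and terminal
simplex `σ`. -/
def Gamma (W : Set (Finset U × Finset U)) (τ σ : Finset U) : Set (ExtTraj W) :=
  {P | P.t 0 = τ ∧ P.s (P.k + 1) = σ}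

/-- The Thom–Smale boundary coefficient `Σ_{P ∈ Γ(τ,σ)} w(P)`. -/
def tsCoeff [LinearOrder U] (W : Set (Finset U × Finset U)) (τ σ : Finset U) : ℤ :=
  ∑ᶠ P ∈ Gamma W τ σ, ExtTraj.weight P

/-- The copy of a complex under a vertex map. -/
def copy [DecidableEq U] (f : V → U) (K : Set (Finset V)) : Set (Finset U) :=
  {σ | ∃ γ ∈ K, σ = γ.image f}

/-- Pull a simplex of a copy back to the original vertex set. -/
def pull [Fintype V] [DecidableEq U] (f : V → U) (σ : Finset U) : Finset V :=
  Finset.univ.filter fun v => f v ∈ σ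

/-- The ground simplex of a simplex of the prism (with `a`-vertices and `b`-vertices). -/
def GS [Fintype V] [DecidableEq U] (a b : V → U) (σ : Finset U) : Finset V :=
  Finset.univ.filter fun v => a v ∈ σ ∨ b v ∈ σ

/-- The simplex `{a_{i₀}, …, a_{i_r}, b_{i_r}, …, b_{i_q}}` of the prism over
`γ = {v_{i₀} < … < v_{i_q}}`, with pivot `v = v_{i_r}`. -/
def mixA [LinearOrder V] [DecidableEq U] (a b : V → U) (γ : Finset V) (v : V) : Finset U :=
  (γ.filter fun u => u ≤ v).image a ∪ (γ.filter fun u => v ≤ u).image b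

/-- The simplex `{a_{i₀}, …, a_{i_{r-1}}, b_{i_r}, …, b_{i_q}}` of the prism over
`γ`, with pivot `v = v_{i_r}`. -/
def mixB [LinearOrder V] [DecidableEq U] (a b : V → U) (γ : Finset V) (v : V) : Finset U :=
  (γ.filter fun u => u < v).image a ∪ (γ.filter fun u => v ≤ u).image b

/-- `A_γ`. -/
def AsetOf [LinearOrder V] [DecidableEq U] (a b : V → U) (γ : Finset V) : Set (Finset U) :=
  {σ | ∃ v ∈ γ, σ = mixA a b γ v}

/-- `B_γ`. -/
def BsetOf [LinearOrder V] [DecidableEq U] (a b : V → U) (γ : Finset V) : Set (Finset U) :=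
  {σ | ∃ v ∈ γ, σ = mixB a b γ v} ∪ {γ.image a}

/-- `S_γ = A_γ ∪ B_γ`. -/
def SsetOf [LinearOrder V] [DecidableEq U] (a b : V → U) (γ : Finset V) : Set (Finset U) :=
  AsetOf a b γ ∪ BsetOf a b γ

/-- The prism `ℙ(C)` over the complex `C`, realized with `a`-vertices and `b`-vertices. -/
def prism [LinearOrder V] [DecidableEq U] (a b : V → U) (C : Set (Finset V)) :
    Set (Finset U) :=
  ⋃ γ ∈ C, SsetOf a b γ

/-- The interior simplices of the prism. -/
def prismInt [LinearOrder V] [DecidableEq U] (a b : V → U) (C : Set (Finset V)) :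
    Set (Finset U) :=
  prism a b C \ (copy a C ∪ copy b C)

/-- The complex `X̃ = Ā ∪ ℙ((A ∩ B)‾) ∪ B̄`. -/
def tilde [LinearOrder V] [DecidableEq U] (a b : V → U) (A B : Set (Finset V)) :
    Set (Finset U) :=
  copy a A ∪ prism a b (A ∩ B) ∪ copy b B

/-- The prism pairing `𝒱`: for each `γ ∈ C` and `v ∈ γ`, the pair
`([a_{i₀},…,a_{i_{r-1}}, b_{i_r},…,b_{i_q}], [a_{i₀},…,a_{i_r}, b_{i_r},…,b_{i_q}])`. -/
def prismVF [LinearOrder V] [DecidableEq U] (a b : V → U) (C : Set (Finset V)) :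
    Set (Finset U × Finset U) :=
  {p | ∃ γ ∈ C, ∃ v ∈ γ, p = (mixB a b γ v, mixA a b γ v)}

/-- `v` is the minimum vertex of `γ`. -/
def isMin [Preorder V] (γ : Finset V) (v : V) : Prop :=
  v ∈ γ ∧ ∀ u ∈ γ, v ≤ u

/-- The pairing `W'` of the interior simplices of the prism, induced by the gradient
vector field `WC` on the copy (under `c`) of the intersection complex `C`. -/
def WprimeSet [Fintype V] [LinearOrder V] [DecidableEq U] (a b c : V → U)
    (C : Set (Finset V)) (WC : Set (Finset U × Finset U)) : Set (Finset U × Finset U) :=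
  {p | ∃ pr ∈ WC, ∃ v, isMin (pull c pr.1) v ∧
      p = (mixA a b (pull c pr.1) v, mixA a b (pull c pr.2) v)} ∪
  {p | ∃ pr ∈ WC, ∃ v vm am, isMin (pull c pr.2) vm ∧ isMin (pull c pr.1) am ∧
      v ∈ pull c pr.2 ∧ v ≠ vm ∧
      p = (mixB a b (pull c pr.2) v, mixA a b (pull c pr.2) (if v = am then vm else v))} ∪
  {p | ∃ pr ∈ WC, ∃ v am, isMin (pull c pr.1) am ∧ v ∈ pull c pr.1 ∧ v ≠ am ∧
      p = (mixB a b (pull c pr.1) v, mixA a b (pull c pr.1) v)} ∪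
  {p | ∃ γ : Finset V, γ ∈ C ∧ IsCritical WC (γ.image c) ∧
      ∃ v vm, isMin γ vm ∧ v ∈ γ ∧ v ≠ vm ∧ p = (mixB a b γ v, mixA a b γ v)}

/-- The discrete vector field `W = W_Ā ∪ W_B̄ ∪ W'` on `X̃`. -/
def Wfield [Fintype V] [LinearOrder V] [DecidableEq U] (a b c : V → U)
    (C : Set (Finset V)) (WA WB WC : Set (Finset U × Finset U)) :
    Set (Finset U × Finset U) :=
  WA ∪ WB ∪ WprimeSet a b c C WC

/-- Transfer a simplex of the copy under `c` to the corresponding simplex of the copy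
under `f`. -/
def transferMap [Fintype V] [DecidableEq U] (c f : V → U) (σ : Finset U) : Finset U :=
  (pull c σ).image f

/-- A mixed (Mayer–Vietoris) trajectory: a descending extended trajectory
`τ₀, σ₁, τ₁, …, σ_p, τ_p` for `WC` in the copy of the intersection, transferred by
`tr` into another copy, followed by an ascending path
`τ'_p, α_p, τ'_{p+1}, …, α_{p+l-1}, τ'_{p+l}` for `WD`. -/
structure MixTraj (WC WD : Set (Finset U × Finset U)) (tr : Finset U → Finset U) where
  p : ℕ
  l : ℕ
  t : ℕ → Finset U
  s : ℕ → Finset U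
  t' : ℕ → Finset U
  a' : ℕ → Finset U
  dim_t : ∀ i ≤ p, (t i).card = (t 0).card
  dim_s : ∀ i, 1 ≤ i → i ≤ p → (s i).card + 1 = (t 0).card
  dim_t' : ∀ i, p ≤ i → i ≤ p + l → (t' i).card = (t 0).card
  dim_a' : ∀ i, p ≤ i → i < p + l → (a' i).card = (t 0).card + 1
  mem_s : ∀ i, 1 ≤ i → i ≤ p → (s i, t i) ∈ WC
  sub_s : ∀ i, 1 ≤ i → i ≤ p → s i ⊆ t (i - 1)
  nmem_s : ∀ i, 1 ≤ i → i ≤ p → (s i, t (i - 1)) ∉ WC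
  link : t' p = tr (t p)
  mem_a : ∀ i, p ≤ i → i < p + l → (t' i, a' i) ∈ WD
  sub_a : ∀ i, p + 1 ≤ i → i ≤ p + l → t' i ⊆ a' (i - 1)
  nmem_a : ∀ i, p + 1 ≤ i → i ≤ p + l → (t' i, a' (i - 1)) ∉ WD
  pad_t : ∀ i, p < i → t i = ∅
  pad_s : ∀ i, i = 0 ∨ p < i → s i = ∅
  pad_t' : ∀ i, i < p ∨ p + l < i → t' i = ∅
  pad_a' : ∀ i, i < p ∨ p + l ≤ i → a' i = ∅

/-- The product of incidence signs along a mixed trajectory (without the leading sign). -/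
def MixTraj.wcore [LinearOrder U] {WC WD : Set (Finset U × Finset U)}
    {tr : Finset U → Finset U} (P : MixTraj WC WD tr) : ℤ :=
  (∏ i ∈ Finset.range P.p,
      -(incidence (P.t i) (P.s (i + 1)) * incidence (P.t (i + 1)) (P.s (i + 1)))) *
  ∏ i ∈ Finset.range P.l,
      -(incidence (P.a' (P.p + i)) (P.t' (P.p + i)) *
        incidence (P.a' (P.p + i)) (P.t' (P.p + i + 1)))

/-- A Mayer–Vietoris trajectory: one of the five kinds. -/
inductive MVTraj (WA WB WC : Set (Finset U × Finset U)) (trA trB : Finset U → Finset U)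
  | viaA : ExtTraj WA → MVTraj WA WB WC trA trB
  | viaB : ExtTraj WB → MVTraj WA WB WC trA trB
  | viaC : ExtTraj WC → MVTraj WA WB WC trA trB
  | crossA : MixTraj WC WA trA → MVTraj WA WB WC trA trB
  | crossB : MixTraj WC WB trB → MVTraj WA WB WC trA trB

/-- The weight `w_M` of a Mayer–Vietoris trajectory. -/
def MVTraj.wM [LinearOrder U] {WA WB WC : Set (Finset U × Finset U)}
    {trA trB : Finset U → Finset U} : MVTraj WA WB WC trA trB → ℤ
  | .viaA P => P.weight
  | .viaB P => P.weight
  | .viaC P => -P.weight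
  | .crossA P => -P.wcore
  | .crossB P => P.wcore

/-- A Mayer–Vietoris trajectory goes from `β` to `α` (with the required criticality of
the endpoints in the respective copies `Abar`, `Bbar`, `Cbar`). -/
def MVTraj.ends {WA WB WC : Set (Finset U × Finset U)} {trA trB : Finset U → Finset U}
    (Abar Bbar Cbar : Set (Finset U)) :
    MVTraj WA WB WC trA trB → Finset U → Finset U → Prop
  | .viaA T, β, α => T.t 0 = β ∧ T.s (T.k + 1) = α ∧
      β ∈ Abar ∧ IsCritical WA β ∧ α ∈ Abar ∧ IsCritical WA α
  | .viaB T, β, α => T.t 0 = β ∧ T.s (T.k + 1) = α ∧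
      β ∈ Bbar ∧ IsCritical WB β ∧ α ∈ Bbar ∧ IsCritical WB α
  | .viaC T, β, α => T.t 0 = β ∧ T.s (T.k + 1) = α ∧
      β ∈ Cbar ∧ IsCritical WC β ∧ α ∈ Cbar ∧ IsCritical WC α
  | .crossA T, β, α => T.t 0 = β ∧ T.t' (T.p + T.l) = α ∧
      β ∈ Cbar ∧ IsCritical WC β ∧ α ∈ Abar ∧ IsCritical WA α
  | .crossB T, β, α => T.t 0 = β ∧ T.t' (T.p + T.l) = α ∧
      β ∈ Cbar ∧ IsCritical WC β ∧ α ∈ Bbar ∧ IsCritical WB α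

/-- `MV(β, α)`: the set of Mayer–Vietoris trajectories from `β` to `α`. -/
def MVset (WA WB WC : Set (Finset U × Finset U)) (trA trB : Finset U → Finset U)
    (Abar Bbar Cbar : Set (Finset U)) (β α : Finset U) :
    Set (MVTraj WA WB WC trA trB) :=
  {P | MVTraj.ends Abar Bbar Cbar P β α}

/-- The Mayer–Vietoris boundary coefficient `Σ_{P ∈ MV(β,α)} w_M(P)`. -/
def mvCoeff [LinearOrder U] (WA WB WC : Set (Finset U × Finset U))
    (trA trB : Finset U → Finset U) (Abar Bbar Cbar : Set (Finset U))
    (β α : Finset U) : ℤ :=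
  ∑ᶠ P ∈ MVset WA WB WC trA trB Abar Bbar Cbar β α, MVTraj.wM P

/-- The generating sets `D_q(X)`. -/
def Dset (Abar Bbar Cbar : Set (Finset U)) (WA WB WC : Set (Finset U × Finset U)) :
    ℕ → Set (Finset U)
  | 0 => critSet Abar WA 0 ∪ critSet Bbar WB 0
  | (q + 1) => critSet Abar WA (q + 1) ∪ critSet Bbar WB (q + 1) ∪ critSet Cbar WC q

/-- The `q`-dimensional simplices of a complex. -/
def simpSet (K : Set (Finset V)) (q : ℕ) : Set (Finset V) :=
  {σ | σ ∈ K ∧ σ.card = q + 1}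

/-- The boundary homomorphism of a chain complex of free abelian groups, determined by a
matrix of coefficients. -/
def chainBoundary {ι κ : Type*} (coeff : ι → κ → ℤ) : (ι →₀ ℤ) →ₗ[ℤ] (κ →₀ ℤ) :=
  Finsupp.lsum ℤ fun i =>
    LinearMap.toSpanSingleton ℤ (κ →₀ ℤ) (∑ᶠ j : κ, coeff i j • Finsupp.single j 1)

/-- The family of boundary maps of the chain complex of free abelian groups with
generating sets `S q` and boundary coefficients `coeff` (with the convention that the
boundary in degree `0` is the zero map). -/
def fullBoundary {W : Type*} (S : ℕ → Set (Finset W)) (coeff : Finset W → Finset W → ℤ) :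
    ∀ q : ℕ, ((S q : Set (Finset W)) →₀ ℤ) →+ ((S (q - 1) : Set (Finset W)) →₀ ℤ)
  | 0 => 0
  | (q + 1) => (chainBoundary fun (i : (S (q + 1) : Set (Finset W))) (j : (S q : Set (Finset W))) =>
      coeff (i : Finset W) (j : Finset W)).toAddMonoidHom

/-- `ker d ⧸ im d'`. -/
abbrev homologyAt {L M N : Type*} [AddCommGroup L] [AddCommGroup M] [AddCommGroup N]
    (d : M →+ N) (d' : L →+ M) : Type _ :=
  (↥d.ker) ⧸ (AddSubgroup.comap d.ker.subtype d'.range)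

/-- The `q`-th homology group of the chain complex of free abelian groups with
generating sets `S` and boundary coefficients `coeff`. -/
abbrev homologyOf {W : Type*} (S : ℕ → Set (Finset W)) (coeff : Finset W → Finset W → ℤ)
    (q : ℕ) : Type _ :=
  homologyAt (fullBoundary S coeff q) (fullBoundary S coeff (q + 1))

/-- The map `f` from critical simplices of `X̃` to generators of the Mayer–Vietoris
complex: the identity on critical simplices of `Ā` and `B̄`, and the (copy in
`(A ∩ B)‾` of the) ground simplex on interior critical simplices of the prism. -/
def fmap [Fintype V] [LinearOrder V] [DecidableEq U] (a b c : V → U)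
    (C : Set (Finset V)) (τ : Finset U) : Finset U :=
  if τ ∈ prismInt a b C then (GS a b τ).image c else τ

/-- The simplex `[a_{i₀}, b_{i₀}, …, b_{i_{q-1}}]` of the prism over `γ`. -/
def aMinCopy [Fintype V] [LinearOrder V] [DecidableEq U] (a b : V → U) (γ : Finset V) :
    Finset U :=
  (γ.filter fun u => ∀ w ∈ γ, u ≤ w).image a ∪ γ.image b

/-- The map `g` from generators of the Mayer–Vietoris complex to critical simplices of
`X̃`: the identity on critical simplices of `Ā` and `B̄`, and
`[c_{i₀},…,c_{i_{q-1}}] ↦ [a_{i₀}, b_{i₀}, …, b_{i_{q-1}}]` on critical simplices of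
`(A ∩ B)‾`. -/
def gmap [Fintype V] [LinearOrder V] [DecidableEq U] (a b c : V → U)
    (Cbar : Set (Finset U)) (α : Finset U) : Finset U :=
  if α ∈ Cbar then aMinCopy a b (pull c α) else α


section Helpers

variable {V₀ : Type*} {U₀ : Type*} [Fintype V₀] [LinearOrder V₀] [DecidableEq U₀]
variable {a b c : V₀ → U₀} {γ δ : Finset V₀} {v w : V₀} {C : Set (Finset V₀)}

lemma a_mem_mixA (hv : v ∈ γ) : a v ∈ mixA a b γ v :=
  Finset.mem_union_left _ (Finset.mem_image_of_mem a (Finset.mem_filter.2 ⟨hv, le_refl v⟩))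

lemma b_mem_mixA (hv : v ∈ γ) : b v ∈ mixA a b γ v :=
  Finset.mem_union_right _ (Finset.mem_image_of_mem b (Finset.mem_filter.2 ⟨hv, le_refl v⟩))

lemma mem_mixA_a (hainj : Function.Injective a) (hab : ∀ u v : V₀, a u ≠ b v) :
    a w ∈ mixA a b γ v ↔ w ∈ γ ∧ w ≤ v := by
  simp only [mixA, Finset.mem_union, Finset.mem_image, Finset.mem_filter]
  constructor
  · rintro (⟨x, ⟨hx, hxv⟩, hxw⟩ | ⟨x, ⟨hx, hxv⟩, hxw⟩)
    · obtain rfl := hainj hxw; exact ⟨hx, hxv⟩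
    · exact absurd hxw.symm (hab w x)
  · rintro ⟨h1, h2⟩
    exact Or.inl ⟨w, ⟨h1, h2⟩, rfl⟩

lemma mem_mixA_b (hbinj : Function.Injective b) (hab : ∀ u v : V₀, a u ≠ b v) :
    b w ∈ mixA a b γ v ↔ w ∈ γ ∧ v ≤ w := by
  simp only [mixA, Finset.mem_union, Finset.mem_image, Finset.mem_filter]
  constructor
  · rintro (⟨x, ⟨hx, hxv⟩, hxw⟩ | ⟨x, ⟨hx, hxv⟩, hxw⟩)
    · exact absurd hxw (hab x w)
    · obtain rfl := hbinj hxw; exact ⟨hx, hxv⟩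
  · rintro ⟨h1, h2⟩
    exact Or.inr ⟨w, ⟨h1, h2⟩, rfl⟩

lemma mem_mixB_a (hainj : Function.Injective a) (hab : ∀ u v : V₀, a u ≠ b v) :
    a w ∈ mixB a b γ v ↔ w ∈ γ ∧ w < v := by
  simp only [mixB, Finset.mem_union, Finset.mem_image, Finset.mem_filter]
  constructor
  · rintro (⟨x, ⟨hx, hxv⟩, hxw⟩ | ⟨x, ⟨hx, hxv⟩, hxw⟩)
    · obtain rfl := hainj hxw; exact ⟨hx, hxv⟩
    · exact absurd hxw.symm (hab w x)
  · rintro ⟨h1, h2⟩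
    exact Or.inl ⟨w, ⟨h1, h2⟩, rfl⟩

lemma mem_mixB_b (hbinj : Function.Injective b) (hab : ∀ u v : V₀, a u ≠ b v) :
    b w ∈ mixB a b γ v ↔ w ∈ γ ∧ v ≤ w := by
  simp only [mixB, Finset.mem_union, Finset.mem_image, Finset.mem_filter]
  constructor
  · rintro (⟨x, ⟨hx, hxv⟩, hxw⟩ | ⟨x, ⟨hx, hxv⟩, hxw⟩)
    · exact absurd hxw (hab x w)
    · obtain rfl := hbinj hxw; exact ⟨hx, hxv⟩
  · rintro ⟨h1, h2⟩
    exact Or.inr ⟨w, ⟨h1, h2⟩, rfl⟩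

lemma GS_mixA (hainj : Function.Injective a) (hbinj : Function.Injective b)
    (hab : ∀ u v : V₀, a u ≠ b v) : GS a b (mixA a b γ v) = γ := by
  ext u
  simp only [GS, Finset.mem_filter, Finset.mem_univ, true_and]
  rw [mem_mixA_a hainj hab, mem_mixA_b hbinj hab]
  constructor
  · rintro (⟨h, -⟩ | ⟨h, -⟩) <;> exact h
  · intro h
    rcases le_total u v with h' | h'
    · exact Or.inl ⟨h, h'⟩
    · exact Or.inr ⟨h, h'⟩

lemma GS_mixB (hainj : Function.Injective a) (hbinj : Function.Injective b)
    (hab : ∀ u v : V₀, a u ≠ b v) : GS a b (mixB a b γ v) = γ := by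
  ext u
  simp only [GS, Finset.mem_filter, Finset.mem_univ, true_and]
  rw [mem_mixB_a hainj hab, mem_mixB_b hbinj hab]
  constructor
  · rintro (⟨h, -⟩ | ⟨h, -⟩) <;> exact h
  · intro h
    rcases lt_or_ge u v with h' | h'
    · exact Or.inl ⟨h, h'⟩
    · exact Or.inr ⟨h, h'⟩

lemma mixA_inj (hainj : Function.Injective a) (hbinj : Function.Injective b)
    (hab : ∀ u v : V₀, a u ≠ b v) (hv : v ∈ γ) (hw : w ∈ δ)
    (h : mixA a b γ v = mixA a b δ w) : γ = δ ∧ v = w := by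
  have hγδ : γ = δ := by
    have := congrArg (GS a b) h
    rwa [GS_mixA hainj hbinj hab, GS_mixA hainj hbinj hab] at this
  refine ⟨hγδ, ?_⟩
  have h1 : a w ∈ mixA a b γ v := h ▸ a_mem_mixA hw
  have h2 : b w ∈ mixA a b γ v := h ▸ b_mem_mixA hw
  rw [mem_mixA_a hainj hab] at h1
  rw [mem_mixA_b hbinj hab] at h2
  exact le_antisymm h2.2 h1.2

lemma mixB_ne_mixA (hainj : Function.Injective a) (hbinj : Function.Injective b)
    (hab : ∀ u v : V₀, a u ≠ b v) (hw : w ∈ δ) : mixB a b γ v ≠ mixA a b δ w := by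
  intro h
  have h1 : a w ∈ mixB a b γ v := h ▸ a_mem_mixA hw
  have h2 : b w ∈ mixB a b γ v := h ▸ b_mem_mixA hw
  rw [mem_mixB_a hainj hab] at h1
  rw [mem_mixB_b hbinj hab] at h2
  exact absurd h1.2 (not_lt.2 h2.2)

lemma mixB_min (hmin : isMin γ v) : mixB a b γ v = γ.image b := by
  ext u
  simp only [mixB, Finset.mem_union, Finset.mem_image, Finset.mem_filter]
  constructor
  · rintro (⟨x, ⟨hx, hxv⟩, rfl⟩ | ⟨x, ⟨hx, -⟩, rfl⟩)
    · exact absurd hxv (not_lt.2 (hmin.2 x hx))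
    · exact ⟨x, hx, rfl⟩
  · rintro ⟨x, hx, rfl⟩
    exact Or.inr ⟨x, ⟨hx, hmin.2 x hx⟩, rfl⟩

lemma mixA_not_copy_a (hab : ∀ u v : V₀, a u ≠ b v) (hv : v ∈ γ) :
    mixA a b γ v ∉ copy a C := by
  rintro ⟨δ', hδ', heq⟩
  have hb : b v ∈ mixA a b γ v := b_mem_mixA hv
  rw [heq] at hb
  obtain ⟨x, -, hx⟩ := Finset.mem_image.1 hb
  exact hab x v hx

lemma mixA_not_copy_b (hab : ∀ u v : V₀, a u ≠ b v) (hv : v ∈ γ) :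
    mixA a b γ v ∉ copy b C := by
  rintro ⟨δ', hδ', heq⟩
  have ha' : a v ∈ mixA a b γ v := a_mem_mixA hv
  rw [heq] at ha'
  obtain ⟨x, -, hx⟩ := Finset.mem_image.1 ha'
  exact hab v x hx.symm

lemma pull_image (hcinj : Function.Injective c) : pull c (γ.image c) = γ := by
  ext u
  simp only [pull, Finset.mem_filter, Finset.mem_univ, true_and, Finset.mem_image]
  constructor
  · rintro ⟨x, hx, he⟩
    obtain rfl := hcinj he
    exact hx
  · intro h
    exact ⟨u, h, rfl⟩

lemma pull_mono {σ τ : Finset U₀} (h : σ ⊆ τ) : pull c σ ⊆ pull c τ := by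
  intro u hu
  simp only [pull, Finset.mem_filter, Finset.mem_univ, true_and] at hu ⊢
  exact h hu

lemma isMin_unique (h1 : isMin γ v) (h2 : isMin γ w) : v = w :=
  le_antisymm (h1.2 w h2.1) (h2.2 v h1.1)

lemma isMin_min' (hne : γ.Nonempty) : isMin γ (γ.min' hne) :=
  ⟨Finset.min'_mem _ _, fun u hu => Finset.min'_le _ _ hu⟩

end Helpers

/-- For every `W_(A∩B)‾`-critical simplex `γ` of `(A∩B)‾` there is
exactly one simplex of `S'_γ` unpaired in `W`, and it lies in `A_γ`, namely
`[ā_i₀, b̄_i₀, …, b̄_i_q]`; conversely, every interior prism simplex unpaired in `W`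
has `W_(A∩B)‾`-critical ground simplex. -/
theorem Wfield_critical_interior_simplices
    {V : Type*} {U : Type*} [Fintype V] [LinearOrder V] [LinearOrder U]
    (X A B : Set (Finset V)) (a b c : V → U)
    (WA WB WC : Set (Finset U × Finset U))
    (hX : IsComplex X) (hA : IsComplex A) (hB : IsComplex B)
    (hUnion : A ∪ B = X)
    (ha : StrictMono a) (hb : StrictMono b) (hc : StrictMono c)
    (hab : ∀ u v : V, a u ≠ b v) (hac : ∀ u v : V, a u ≠ c v)
    (hbc : ∀ u v : V, b u ≠ c v)
    (hWA : IsGVF (copy a A) WA) (hWB : IsGVF (copy b B) WB)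
    (hWC : IsGVF (copy c (A ∩ B)) WC) :
    (∀ γ : Finset V, γ ∈ A ∩ B → IsCritical WC (γ.image c) →
      (∃! σ : Finset U, σ ∈ SsetOf a b γ ∧ σ ∈ prismInt a b (A ∩ B) ∧
          IsCritical (Wfield a b c (A ∩ B) WA WB WC) σ) ∧
        ∀ σ : Finset U, σ ∈ SsetOf a b γ → σ ∈ prismInt a b (A ∩ B) →
          IsCritical (Wfield a b c (A ∩ B) WA WB WC) σ →
          σ ∈ AsetOf a b γ ∧ ∃ v, isMin γ v ∧ σ = mixA a b γ v) ∧
      ∀ σ ∈ prismInt a b (A ∩ B), IsCritical (Wfield a b c (A ∩ B) WA WB WC) σ →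
        (GS a b σ).image c ∈ copy c (A ∩ B) ∧ IsCritical WC ((GS a b σ).image c) := by
  classical
  have hainj := ha.injective
  have hbinj := hb.injective
  have hcinj := hc.injective
  set C : Set (Finset V) := A ∩ B with hCdef
  have hne : ∀ δ ∈ C, δ.Nonempty := fun δ hδ => (hA.2 δ hδ.1).1
  have hCc : ∀ σ : Finset U, σ ∈ copy c C → pull c σ ∈ C ∧ (pull c σ).image c = σ := by
    rintro σ ⟨δ', hδ', rfl⟩
    rw [pull_image hcinj]
    exact ⟨hδ', rfl⟩
  -- `mixA γ v` is critical for the minimum `v`, when `γ.image c` is `WC`-critical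
  have keycrit : ∀ γ ∈ C, IsCritical WC (γ.image c) → ∀ v, isMin γ v →
      IsCritical (Wfield a b c C WA WB WC) (mixA a b γ v) := by
    intro γ hγ hcrit v hv p hp
    simp only [Wfield, WprimeSet, Set.mem_union, Set.mem_setOf_eq] at hp
    rcases hp with (hp | hp) | hp
    · constructor <;> intro h
      · exact mixA_not_copy_a hab hv.1 (h ▸ (hWA.1.1 p hp).1)
      · exact mixA_not_copy_a hab hv.1 (h ▸ (hWA.1.1 p hp).2.1)
    · constructor <;> intro h
      · exact mixA_not_copy_b hab hv.1 (h ▸ (hWB.1.1 p hp).1)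
      · exact mixA_not_copy_b hab hv.1 (h ▸ (hWB.1.1 p hp).2.1)
    · have key1 : ∀ pr ∈ WC, ∀ w, w ∈ pull c pr.1 →
          mixA a b (pull c pr.1) w ≠ mixA a b γ v := by
        intro pr hpr w hw h
        obtain ⟨heq, -⟩ := mixA_inj hainj hbinj hab hw hv.1 h
        obtain ⟨-, himg⟩ := hCc pr.1 (hWC.1.1 pr hpr).1
        rw [heq] at himg
        exact (hcrit pr hpr).1 himg.symm
      have key2 : ∀ pr ∈ WC, ∀ w, w ∈ pull c pr.2 →
          mixA a b (pull c pr.2) w ≠ mixA a b γ v := by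
        intro pr hpr w hw h
        obtain ⟨heq, -⟩ := mixA_inj hainj hbinj hab hw hv.1 h
        obtain ⟨-, himg⟩ := hCc pr.2 (hWC.1.1 pr hpr).2.1
        rw [heq] at himg
        exact (hcrit pr hpr).2 himg.symm
      rcases hp with ((h1 | h2) | h3) | h4
      · obtain ⟨pr, hpr, w, hwmin, rfl⟩ := h1
        exact ⟨key1 pr hpr w hwmin.1,
          key2 pr hpr w (pull_mono (hWC.1.1 pr hpr).2.2.1 hwmin.1)⟩
      · obtain ⟨pr, hpr, w, wm, am, hwm, ham, hw, hwne, rfl⟩ := h2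
        refine ⟨mixB_ne_mixA hainj hbinj hab hv.1, ?_⟩
        have hx : (if w = am then wm else w) ∈ pull c pr.2 := by
          split_ifs
          · exact hwm.1
          · exact hw
        exact key2 pr hpr _ hx
      · obtain ⟨pr, hpr, w, am, ham, hw, hwne, rfl⟩ := h3
        exact ⟨mixB_ne_mixA hainj hbinj hab hv.1, key1 pr hpr w hw⟩
      · obtain ⟨δ, hδ, hδcrit, w, wm, hwm, hw, hwne, rfl⟩ := h4
        refine ⟨mixB_ne_mixA hainj hbinj hab hv.1, ?_⟩
        intro h
        obtain ⟨hγδ, hwv⟩ := mixA_inj hainj hbinj hab hw hv.1 h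
        apply hwne
        rw [hwv]
        exact isMin_unique hv (hγδ ▸ hwm)
  -- `mixA γ v` belongs to `S'_γ`
  have keymem : ∀ γ ∈ C, ∀ v ∈ γ, mixA a b γ v ∈ SsetOf a b γ ∧
      mixA a b γ v ∈ prismInt a b C := by
    intro γ hγ v hv
    have hS : mixA a b γ v ∈ SsetOf a b γ := Set.mem_union_left _ ⟨v, hv, rfl⟩
    refine ⟨hS, ?_⟩
    simp only [prismInt, Set.mem_diff, Set.mem_union]
    refine ⟨?_, ?_⟩
    · show mixA a b γ v ∈ ⋃ δ ∈ C, SsetOf a b δ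
      exact Set.mem_biUnion hγ hS
    · rintro (h | h)
      · exact mixA_not_copy_a hab hv h
      · exact mixA_not_copy_b hab hv h
  -- any critical element of `S'_γ` is `mixA γ v` for the minimum `v`
  have keyuniq : ∀ γ ∈ C, IsCritical WC (γ.image c) → ∀ σ : Finset U,
      σ ∈ SsetOf a b γ → σ ∈ prismInt a b C →
      IsCritical (Wfield a b c C WA WB WC) σ → ∃ v, isMin γ v ∧ σ = mixA a b γ v := by
    intro γ hγ hcrit σ hS hInt hcritσ
    have hγne := hne γ hγ
    have hmin := isMin_min' hγne
    have hIntd := hInt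
    simp only [prismInt, Set.mem_diff, Set.mem_union] at hIntd
    simp only [SsetOf, AsetOf, BsetOf, Set.mem_union, Set.mem_setOf_eq,
      Set.mem_singleton_iff] at hS
    rcases hS with ⟨w, hw, rfl⟩ | (⟨w, hw, rfl⟩ | hBa)
    · by_cases hwm : w = γ.min' hγne
      · exact ⟨w, hwm ▸ hmin, rfl⟩
      · exfalso
        have hpmem : (mixB a b γ w, mixA a b γ w) ∈ Wfield a b c C WA WB WC :=
          Set.mem_union_right _ (Set.mem_union_right _
            ⟨γ, hγ, hcrit, w, γ.min' hγne, hmin, hw, hwm, rfl⟩)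
        exact (hcritσ _ hpmem).2 rfl
    · exfalso
      by_cases hwm : w = γ.min' hγne
      · apply hIntd.2
        right
        rw [hwm, mixB_min hmin]
        exact ⟨γ, hγ, rfl⟩
      · have hpmem : (mixB a b γ w, mixA a b γ w) ∈ Wfield a b c C WA WB WC :=
          Set.mem_union_right _ (Set.mem_union_right _
            ⟨γ, hγ, hcrit, w, γ.min' hγne, hmin, hw, hwm, rfl⟩)
        exact (hcritσ _ hpmem).1 rfl
    · exfalso
      apply hIntd.2
      left
      rw [hBa]
      exact ⟨γ, hγ, rfl⟩
  -- the converse statement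
  have keyconv : ∀ σ ∈ prismInt a b C, IsCritical (Wfield a b c C WA WB WC) σ →
      (GS a b σ).image c ∈ copy c C ∧ IsCritical WC ((GS a b σ).image c) := by
    intro σ hInt hcritσ
    have hIntd := hInt
    simp only [prismInt, Set.mem_diff, Set.mem_union, prism, Set.mem_iUnion] at hIntd
    obtain ⟨⟨δ, hδ, hσS⟩, hncopy⟩ := hIntd
    have hδne := hne δ hδ
    have hδmin := isMin_min' hδne
    simp only [SsetOf, AsetOf, BsetOf, Set.mem_union, Set.mem_setOf_eq,
      Set.mem_singleton_iff] at hσS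
    rcases hσS with ⟨w, hw, rfl⟩ | (⟨w, hw, rfl⟩ | hBa)
    · -- σ = mixA δ w
      rw [GS_mixA hainj hbinj hab]
      refine ⟨⟨δ, hδ, rfl⟩, fun pr hpr => ⟨?_, ?_⟩⟩
      · intro h
        have hpd : pull c pr.1 = δ := by rw [h, pull_image hcinj]
        by_cases hwm : w = δ.min' hδne
        · have hpmem : (mixA a b (pull c pr.1) (δ.min' hδne),
              mixA a b (pull c pr.2) (δ.min' hδne)) ∈ Wfield a b c C WA WB WC :=
            Set.mem_union_right _ (Set.mem_union_left _ (Set.mem_union_left _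
              (Set.mem_union_left _
                ⟨pr, hpr, δ.min' hδne, by rw [hpd]; exact hδmin, rfl⟩)))
          exact (hcritσ _ hpmem).1 (by rw [hpd, ← hwm])
        · have hpmem : (mixB a b (pull c pr.1) w, mixA a b (pull c pr.1) w)
              ∈ Wfield a b c C WA WB WC :=
            Set.mem_union_right _ (Set.mem_union_left _ (Set.mem_union_right _
              ⟨pr, hpr, w, δ.min' hδne, by rw [hpd]; exact hδmin,
                by rw [hpd]; exact hw, hwm, rfl⟩))
          exact (hcritσ _ hpmem).2 (by rw [hpd])
      · intro h
        have hpd2 : pull c pr.2 = δ := by rw [h, pull_image hcinj]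
        obtain ⟨hpr1C, -⟩ := hCc pr.1 (hWC.1.1 pr hpr).1
        have hp1ne : (pull c pr.1).Nonempty := hne _ hpr1C
        have hammin : isMin (pull c pr.1) ((pull c pr.1).min' hp1ne) := isMin_min' hp1ne
        have hamδ : (pull c pr.1).min' hp1ne ∈ pull c pr.2 :=
          pull_mono (hWC.1.1 pr hpr).2.2.1 hammin.1
        have hvmmin : isMin (pull c pr.2) (δ.min' hδne) := by rw [hpd2]; exact hδmin
        by_cases hwam : w = (pull c pr.1).min' hp1ne
        · have hpmem : (mixA a b (pull c pr.1) ((pull c pr.1).min' hp1ne),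
              mixA a b (pull c pr.2) ((pull c pr.1).min' hp1ne))
              ∈ Wfield a b c C WA WB WC :=
            Set.mem_union_right _ (Set.mem_union_left _ (Set.mem_union_left _
              (Set.mem_union_left _ ⟨pr, hpr, (pull c pr.1).min' hp1ne, hammin, rfl⟩)))
          exact (hcritσ _ hpmem).2 (by rw [hpd2, ← hwam])
        · by_cases hwvm : w = δ.min' hδne
          · have hamne : (pull c pr.1).min' hp1ne ≠ δ.min' hδne :=
              fun hh => hwam (hwvm.trans hh.symm)
            have hpmem : (mixB a b (pull c pr.2) ((pull c pr.1).min' hp1ne),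
                mixA a b (pull c pr.2)
                  (if (pull c pr.1).min' hp1ne = (pull c pr.1).min' hp1ne then
                    δ.min' hδne else (pull c pr.1).min' hp1ne))
                ∈ Wfield a b c C WA WB WC :=
              Set.mem_union_right _ (Set.mem_union_left _ (Set.mem_union_left _
                (Set.mem_union_right _
                  ⟨pr, hpr, (pull c pr.1).min' hp1ne, δ.min' hδne,
                    (pull c pr.1).min' hp1ne, hvmmin, hammin, hamδ, hamne, rfl⟩)))
            apply (hcritσ _ hpmem).2
            rw [if_pos rfl, hpd2, ← hwvm]
          · have hpmem : (mixB a b (pull c pr.2) w,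
                mixA a b (pull c pr.2)
                  (if w = (pull c pr.1).min' hp1ne then δ.min' hδne else w))
                ∈ Wfield a b c C WA WB WC :=
              Set.mem_union_right _ (Set.mem_union_left _ (Set.mem_union_left _
                (Set.mem_union_right _
                  ⟨pr, hpr, w, δ.min' hδne, (pull c pr.1).min' hp1ne,
                    hvmmin, hammin, by rw [hpd2]; exact hw, hwvm, rfl⟩)))
            apply (hcritσ _ hpmem).2
            rw [if_neg hwam, hpd2]
    · -- σ = mixB δ w
      have hwm : w ≠ δ.min' hδne := by
        intro hh
        apply hncopy
        right
        rw [hh, mixB_min hδmin]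
        exact ⟨δ, hδ, rfl⟩
      rw [GS_mixB hainj hbinj hab]
      refine ⟨⟨δ, hδ, rfl⟩, fun pr hpr => ⟨?_, ?_⟩⟩
      · intro h
        have hpd : pull c pr.1 = δ := by rw [h, pull_image hcinj]
        have hpmem : (mixB a b (pull c pr.1) w, mixA a b (pull c pr.1) w)
            ∈ Wfield a b c C WA WB WC :=
          Set.mem_union_right _ (Set.mem_union_left _ (Set.mem_union_right _
            ⟨pr, hpr, w, δ.min' hδne, by rw [hpd]; exact hδmin,
              by rw [hpd]; exact hw, hwm, rfl⟩))
        exact (hcritσ _ hpmem).1 (by rw [hpd])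
      · intro h
        have hpd2 : pull c pr.2 = δ := by rw [h, pull_image hcinj]
        obtain ⟨hpr1C, -⟩ := hCc pr.1 (hWC.1.1 pr hpr).1
        have hp1ne : (pull c pr.1).Nonempty := hne _ hpr1C
        have hpmem : (mixB a b (pull c pr.2) w,
            mixA a b (pull c pr.2)
              (if w = (pull c pr.1).min' hp1ne then δ.min' hδne else w))
            ∈ Wfield a b c C WA WB WC :=
          Set.mem_union_right _ (Set.mem_union_left _ (Set.mem_union_left _
            (Set.mem_union_right _
              ⟨pr, hpr, w, δ.min' hδne, (pull c pr.1).min' hp1ne,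
                by rw [hpd2]; exact hδmin, isMin_min' hp1ne,
                by rw [hpd2]; exact hw, hwm, rfl⟩)))
        exact (hcritσ _ hpmem).1 (by rw [hpd2])
    · exfalso
      apply hncopy
      left
      rw [hBa]
      exact ⟨δ, hδ, rfl⟩
  refine ⟨?_, keyconv⟩
  intro γ hγ hcrit
  have hγne := hne γ hγ
  have hmin := isMin_min' hγne
  have hm := keymem γ hγ _ hmin.1
  have hc' := keycrit γ hγ hcrit _ hmin
  constructor
  · refine ⟨mixA a b γ (γ.min' hγne), ⟨hm.1, hm.2, hc'⟩, ?_⟩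
    rintro σ ⟨hS, hI, hcr⟩
    obtain ⟨v, hv, rfl⟩ := keyuniq γ hγ hcrit σ hS hI hcr
    rw [isMin_unique hv hmin]
  · intro σ hS hI hcr
    obtain ⟨v, hv, rfl⟩ := keyuniq γ hγ hcrit σ hS hI hcr
    exact ⟨⟨v, hv.1, rfl⟩, v, hv, rfl⟩

end DMT
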